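/- For all 0 ≤ k ≤ n, the Fibonomial coefficient C(n,k)_F = F_n!/(F_k! F_{n−k}!) is a (positive) integer, where F_m! = F_m F_{m−1} ··· F_1 and F_m are the Fibonacci numbers; moreover C(n,k)_F = C(n, n−k)_F. -/
import Mathlib


/-- The Fibonacci factorial `F_n! = F_n F_{n-1} ⋯ F_1`, `F_0! = 1`. -/
def fibFact : ℕ → ℕ
  | 0 => 1
  | n + 1 => Nat.fib (n + 1) * fibFact n

lemma fibFact_pos (n : ℕ) : 0 < fibFact n := by
  induction n with
  | zero => simp [fibFact]
  | succ n ih => exact Nat.mul_pos (Nat.fib_pos.mpr n.succ_pos) ih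

lemma fibFact_dvd (n : ℕ) : ∀ k ≤ n, fibFact k * fibFact (n - k) ∣ fibFact n := by
  induction n with
  | zero =>
    intro k hk
    interval_cases k
    simp [fibFact]
  | succ n ih =>
    intro k hk
    match k with
    | 0 => simp [fibFact]
    | j + 1 =>
      rcases eq_or_lt_of_le hk with h | h
      · rw [h]
        simp [fibFact]
      · have hj : j + 1 ≤ n := Nat.lt_succ_iff.mp h
        have h2 : j ≤ n := Nat.le_of_succ_le hj
        have d1 := ih (j + 1) hj
        have d2 := ih j h2
        have hfib : Nat.fib (n + 1) =
            Nat.fib (j + 1) * Nat.fib (n - j - 1) + Nat.fib (j + 2) * Nat.fib (n - j) := by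
          have h3 := Nat.fib_add (j + 1) (n - j - 1)
          have e1 : (j + 1) + (n - j - 1) + 1 = n + 1 := by omega
          have e2 : n - j - 1 + 1 = n - j := by omega
          rw [e1, e2] at h3
          exact h3
        have hkey : fibFact (n + 1) =
            Nat.fib (j + 1) * Nat.fib (n - j - 1) * fibFact n
            + Nat.fib (j + 2) * Nat.fib (n - j) * fibFact n := by
          show Nat.fib (n + 1) * fibFact n = _
          rw [hfib]; ring
        have e3 : n + 1 - (j + 1) = n - j := by omega
        rw [hkey, e3]
        apply dvd_add
        · have : fibFact (j + 1) * fibFact (n - j)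
              = Nat.fib (j + 1) * (fibFact j * fibFact (n - j)) := by
            show Nat.fib (j + 1) * fibFact j * fibFact (n - j) = _
            ring
          rw [this]
          calc Nat.fib (j + 1) * (fibFact j * fibFact (n - j))
              ∣ Nat.fib (j + 1) * fibFact n := mul_dvd_mul_left _ d2
            _ ∣ Nat.fib (j + 1) * Nat.fib (n - j - 1) * fibFact n :=
              ⟨Nat.fib (n - j - 1), by ring⟩
        · have : fibFact (j + 1) * fibFact (n - j)
              = Nat.fib (n - j) * (fibFact (j + 1) * fibFact (n - (j + 1))) := by
            have e5 : n - (j + 1) = n - j - 1 := by omega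
            have e6 : n - j = (n - j - 1) + 1 := by omega
            rw [e5, e6]
            show fibFact (j + 1) * (Nat.fib (n - j - 1 + 1) * fibFact (n - j - 1)) = _
            rw [← e6]; ring
          rw [this]
          calc Nat.fib (n - j) * (fibFact (j + 1) * fibFact (n - (j + 1)))
              ∣ Nat.fib (n - j) * fibFact n := mul_dvd_mul_left _ d1
            _ ∣ Nat.fib (j + 2) * Nat.fib (n - j) * fibFact n :=
              ⟨Nat.fib (j + 2), by ring⟩

/-- for `0 ≤ k ≤ n` the Fibonomial coefficient
`C(n,k)_F = F_n!/(F_k! F_{n-k}!)` is a positive integer, and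
`C(n,k)_F = C(n,n-k)_F`. -/
theorem fibonomial_is_positive_integer_and_symmetric :
    ∀ n k : ℕ, k ≤ n →
      (∃ m : ℕ, 0 < m ∧
        ((fibFact n : ℚ) / (fibFact k * fibFact (n - k)) = (m : ℚ))) ∧
      (fibFact n : ℚ) / (fibFact k * fibFact (n - k)) =
        (fibFact n : ℚ) / (fibFact (n - k) * fibFact (n - (n - k))) := by
  intro n k hk
  obtain ⟨m, hm⟩ := fibFact_dvd n k hk
  have hkpos := fibFact_pos k
  have hnkpos := fibFact_pos (n - k)
  have hnpos := fibFact_pos n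
  have hmpos : 0 < m := by
    rcases Nat.eq_zero_or_pos m with h | h
    · rw [h, mul_zero] at hm; omega
    · exact h
  constructor
  · refine ⟨m, hmpos, ?_⟩
    have hne : (fibFact k : ℚ) * fibFact (n - k) ≠ 0 := by
      positivity
    rw [div_eq_iff hne]
    push_cast [hm]
    ring
  · rw [Nat.sub_sub_self hk, mul_comm]
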